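/- arXiv:1606.01731 — 5 statements merged into one kernel-verified Lean document; each statement's English description precedes it below -/
import Mathlib

section
/- Let g be a finite-dimensional real Lie algebra equipped with an invariant inner product, let h be a Lie subalgebra of g, and let m be the orthogonal complement of h in g. Assume that the center of g intersects m trivially. Then for every nonzero vector w ∈ m there exists a vector v ∈ m with ⟨w, v⟩ = 0 and ⁅w, v⁆ ≠ 0. -/
/-!
Suppose `w ∈ m` is nonzero and commutes with every `v ∈ m` orthogonal to it. Splitting off the
`w`-component of `v ∈ m` shows that `w` commutes with all of `m`. By invariance `ad w` is skew
for `B`, so its image is orthogonal to its kernel; since `B` is anisotropic, `ad w` therefore kills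
everything it maps into `m`. This applies first to `h` (as `⁅w, h⁆ ⊆ m` for `w ∈ m`) and then to
all of `g` (as `ad w` kills `h`, its image is orthogonal to `h`), so `w` is central.
-/

namespace LinearMap.BilinForm

variable {K g : Type*}

theorem mem_flip_orthogonal_iff [CommRing K] [AddCommGroup g] [Module K g]
    {B : LinearMap.BilinForm K g} {N : Submodule K g} {w : g} :
    w ∈ B.flip.orthogonal N ↔ ∀ x ∈ N, B w x = 0 :=
  Iff.rfl

variable [LieRing g]

section CommRing

variable [CommRing K] [LieAlgebra K g] {B : LinearMap.BilinForm K g}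

theorem lie_eq_zero_of_lie_mem (hinv : B.lieInvariant g) (hanis : ∀ x, B x x = 0 → x = 0)
    {M : Set g} {w y : g} (hwM : ∀ u ∈ M, ⁅w, u⁆ = 0) (hy : ⁅w, y⁆ ∈ M) : ⁅w, y⁆ = 0 :=
  hanis _ <| by rw [hinv, hwM _ hy, map_zero, neg_zero]

theorem lie_mem_flip_orthogonal_of_mem (hinv : B.lieInvariant g) {h : LieSubalgebra K g}
    {w y : g} (hw : w ∈ B.flip.orthogonal h.toSubmodule) (hy : y ∈ h) :
    ⁅w, y⁆ ∈ B.flip.orthogonal h.toSubmodule := by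
  rw [mem_flip_orthogonal_iff] at hw ⊢
  intro z hz
  rw [← lie_skew, map_neg, LinearMap.neg_apply, hinv, hw _ (h.lie_mem hy hz), neg_neg]

theorem lie_mem_flip_orthogonal_of_forall_lie_eq_zero (hinv : B.lieInvariant g)
    {N : Submodule K g} {w : g} (hwN : ∀ x ∈ N, ⁅w, x⁆ = 0) (y : g) :
    ⁅w, y⁆ ∈ B.flip.orthogonal N := by
  rw [mem_flip_orthogonal_iff]
  intro z hz
  rw [hinv, hwN z hz, map_zero, neg_zero]

end CommRing

section Field

variable [Field K] [LieAlgebra K g] {B : LinearMap.BilinForm K g}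

theorem lie_eq_zero_of_forall_orthogonal {M : Submodule K g} {w : g} (hw : w ∈ M)
    (hww : B w w ≠ 0) (hcomm : ∀ v ∈ M, B w v = 0 → ⁅w, v⁆ = 0) {v : g} (hv : v ∈ M) :
    ⁅w, v⁆ = 0 := by
  set c := B w v / B w w
  have hv' : ⁅w, v - c • w⁆ = 0 := by
    refine hcomm _ (M.sub_mem hv (M.smul_mem c hw)) ?_
    rw [map_sub, map_smul, smul_eq_mul, div_mul_cancel₀ _ hww, sub_self]
  rwa [lie_sub, lie_smul, lie_self, smul_zero, sub_zero] at hv'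

theorem forall_lie_eq_zero_of_forall_orthogonal (hinv : B.lieInvariant g)
    (hanis : ∀ x, B x x = 0 → x = 0) {h : LieSubalgebra K g} {w : g}
    (hw : w ∈ B.flip.orthogonal h.toSubmodule) (hw0 : w ≠ 0)
    (hcomm : ∀ v ∈ B.flip.orthogonal h.toSubmodule, B w v = 0 → ⁅w, v⁆ = 0) (y : g) :
    ⁅w, y⁆ = 0 := by
  have hwm : ∀ v ∈ B.flip.orthogonal h.toSubmodule, ⁅w, v⁆ = 0 :=
    fun v ↦ lie_eq_zero_of_forall_orthogonal hw (mt (hanis w) hw0) hcomm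
  have hwh : ∀ x ∈ h.toSubmodule, ⁅w, x⁆ = 0 := fun x hx ↦
    lie_eq_zero_of_lie_mem hinv hanis hwm (lie_mem_flip_orthogonal_of_mem hinv hw hx)
  exact lie_eq_zero_of_lie_mem hinv hanis hwm
    (lie_mem_flip_orthogonal_of_forall_lie_eq_zero hinv hwh y)

end Field

end LinearMap.BilinForm

theorem flagwise_stmt0_general (g : Type*) [LieRing g] [LieAlgebra ℝ g]
    (B : LinearMap.BilinForm ℝ g)
    (hpos : ∀ x : g, x ≠ 0 → 0 < B x x)
    (hinv : ∀ x y z : g, B ⁅x, y⁆ z = - B y ⁅x, z⁆)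
    (h : LieSubalgebra ℝ g)
    (m : Set g) (hm : m = {w : g | ∀ x ∈ h, B w x = 0})
    (hcenter : ∀ w ∈ m, (∀ y : g, ⁅w, y⁆ = 0) → w = 0) :
    ∀ w ∈ m, w ≠ 0 → ∃ v ∈ m, B w v = 0 ∧ ⁅w, v⁆ ≠ 0 := by
  have hm' : m = B.flip.orthogonal h.toSubmodule := hm
  subst hm'
  have hanis : ∀ x, B x x = 0 → x = 0 := fun x hx ↦ by
    by_contra hx0
    exact (hpos x hx0).ne' hx
  intro w hw hw0
  by_contra! hcomm
  exact hw0 <| hcenter w hw <|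
    LinearMap.BilinForm.forall_lie_eq_zero_of_forall_orthogonal hinv hanis hw hw0 hcomm

/-- Let `g` be a finite-dimensional real Lie algebra equipped with an
invariant inner product `B` (a symmetric positive-definite bilinear form satisfying
`⟨⁅x,y⁆, z⟩ = -⟨y, ⁅x,z⁆⟩`), let `h` be a Lie subalgebra of `g`, and let `m` be the
orthogonal complement of `h` in `g`. Assume that the center of `g` intersects `m`
trivially. Then for every nonzero `w ∈ m` there is `v ∈ m` with `⟨w, v⟩ = 0` and
`⁅w, v⁆ ≠ 0`. -/
theorem flagwise_stmt0 (g : Type*) [LieRing g] [LieAlgebra ℝ g] [FiniteDimensional ℝ g]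
    (B : LinearMap.BilinForm ℝ g)
    (hsymm : ∀ x y : g, B x y = B y x)
    (hpos : ∀ x : g, x ≠ 0 → 0 < B x x)
    (hinv : ∀ x y z : g, B ⁅x, y⁆ z = - B y ⁅x, z⁆)
    (h : LieSubalgebra ℝ g)
    (m : Set g) (hm : m = {w : g | ∀ x ∈ h, B w x = 0})
    (hcenter : ∀ w ∈ m, (∀ y : g, ⁅w, y⁆ = 0) → w = 0) :
    ∀ w ∈ m, w ≠ 0 → ∃ v ∈ m, B w v = 0 ∧ ⁅w, v⁆ ≠ 0 :=
  flagwise_stmt0_general g B hpos hinv h m hm hcenter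
end

section
/- Let g be a real Lie algebra equipped with an invariant inner product, let h be a Lie subalgebra of g, and let m be the orthogonal complement of h in g. If w ∈ m satisfies ⁅w, v⁆ = 0 for every v ∈ m, then w lies in the center of g (i.e. ⁅w, y⁆ = 0 for all y ∈ g). -/
/-- Let `g` be a real Lie algebra equipped with an invariant inner
product `B`, let `h` be a Lie subalgebra of `g`, and let `m` be the orthogonal
complement of `h` in `g`. If `w ∈ m` satisfies `⁅w, v⁆ = 0` for every `v ∈ m`, then
`w` lies in the center of `g`. -/
theorem flagwise_stmt1 (g : Type*) [LieRing g] [LieAlgebra ℝ g]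
    (B : LinearMap.BilinForm ℝ g)
    (hsymm : ∀ x y : g, B x y = B y x)
    (hpos : ∀ x : g, x ≠ 0 → 0 < B x x)
    (hinv : ∀ x y z : g, B ⁅x, y⁆ z = - B y ⁅x, z⁆)
    (h : LieSubalgebra ℝ g)
    (m : Set g) (hm : m = {w : g | ∀ x ∈ h, B w x = 0})
    (w : g) (hw : w ∈ m) (hwm : ∀ v ∈ m, ⁅w, v⁆ = 0) :
    ∀ y : g, ⁅w, y⁆ = 0 := by
  subst hm
  -- Step 1: ⁅w, x⁆ = 0 for x ∈ h
  have hstep : ∀ x ∈ h, ⁅w, x⁆ = 0 := by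
    intro x hx
    have hmem : ⁅w, x⁆ ∈ {w : g | ∀ x ∈ h, B w x = 0} := by
      intro x' hx'
      have : ⁅w, x⁆ = -⁅x, w⁆ := by rw [← lie_skew]
      rw [this, map_neg, LinearMap.neg_apply, hinv x w x', hw _ (h.lie_mem hx hx')]
      ring
    have hz := hwm _ hmem
    have hB : B ⁅w, x⁆ ⁅w, x⁆ = 0 := by
      rw [hinv w x ⁅w, x⁆, hz, map_zero, neg_zero]
    by_contra hne
    exact absurd hB (ne_of_gt (hpos _ hne))
  -- Step 2: general y
  intro y
  have hmem : ⁅w, y⁆ ∈ {w : g | ∀ x ∈ h, B w x = 0} := by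
    intro x hx
    rw [hinv w y x, hstep x hx, map_zero, neg_zero]
  have hz := hwm _ hmem
  have hB : B ⁅w, y⁆ ⁅w, y⁆ = 0 := by
    rw [hinv w y ⁅w, y⁆, hz, map_zero, neg_zero]
  by_contra hne
  exact absurd hB (ne_of_gt (hpos _ hne))
end

section
/- Let E be a real inner product space with 3 ≤ dim E < ∞, and let S = {w ∈ E : ‖w‖ = 1} be its unit sphere. Let u₀ ∈ S and r₀ ∈ (0,1), and let u₁, …, u_m ∈ S with radii r₁, …, r_m ∈ (0, √2). Define S' = {w ∈ S : ‖w − u₀‖ = r₀} ∪ {w ∈ S : ‖w + u₀‖ = r₀} ∪ ⋃_{i=1}^{m} {w ∈ S : ‖w − u_i‖ = r_i}. Then there exists δ > 0 such that for every two-dimensional linear subspace P of E there is a unit vector w ∈ P satisfying ‖w − u₀‖ > r₀, ‖w + u₀‖ > r₀, and ‖w − w'‖ > δ for every w' ∈ S'. -/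
/-!
On the unit sphere, `‖w - v‖ = ρ` is the level set `⟪w, v⟫ = 1 - ρ² / 2`, and
`‖w - w'‖ ≥ |⟪w, v⟫ - ⟪w', v⟫|`; so it suffices to find a unit `w ∈ P` with `|⟪w, u₀⟫|` at most
half the height `c₀ = 1 - r₀² / 2` and `⟪w, u i⟫` more than `δ` away from every height
`cᵢ = 1 - rᵢ² / 2 > 0`. Parametrize the unit circle of `P` as `cos θ • e₀ + sin θ • e₁` with
`e₀ ⊥ u₀`, and try the `2m + 1` angles `kΔ`, all close enough to `0` for the condition on `u₀`.
Two angles at which `⟪w, u i⟫` is `δ`-close to `cᵢ`, on the same side of the maximum of this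
sinusoid, are `O(√(δ / cᵢ))` apart; for `δ ≪ cᵢ Δ²` each `i` thus spoils at most two angles,
and one of the `2m + 1` survives.
-/

open Real RealInnerProductSpace Module Finset Filter Topology

lemma exists_pos_lt_and_forall_lt {ι : Type*} [Finite ι] {a : ℝ} {b : ι → ℝ} (ha : 0 < a)
    (hb : ∀ i, 0 < b i) : ∃ δ > 0, δ < a ∧ ∀ i, δ < b i := by
  have hsmall : ∀ᶠ δ in 𝓝[>] (0 : ℝ), δ < a ∧ ∀ i, δ < b i :=
    nhdsWithin_le_nhds <| (eventually_lt_nhds ha).and <|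
      eventually_all.mpr fun i => eventually_lt_nhds (hb i)
  exact (hsmall.and self_mem_nhdsWithin).exists.imp fun _ h => ⟨h.2, h.1⟩

lemma sq_sub_add_sq_sub_le_of_abs_sub_le {g₁ g₂ h₁ h₂ c δ : ℝ} (hδc : 2 * δ ≤ c)
    (hg₁ : |g₁ - c| ≤ δ) (hg₂ : |g₂ - c| ≤ δ) (hR : g₁ ^ 2 + h₁ ^ 2 = g₂ ^ 2 + h₂ ^ 2)
    (hside : 0 ≤ h₁ * h₂) :
    (g₁ - g₂) ^ 2 + (h₁ - h₂) ^ 2 ≤ 8 * c * δ := by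
  obtain ⟨hg₁l, hg₁r⟩ := abs_le.mp hg₁
  obtain ⟨hg₂l, hg₂r⟩ := abs_le.mp hg₂
  have hg : (g₁ - g₂) ^ 2 ≤ 2 * c * δ := by nlinarith
  have hh : (h₁ - h₂) ^ 2 ≤ |g₂ - g₁| * |g₂ + g₁| := by
    have hsame : |h₁ - h₂| ≤ |h₁ + h₂| := sq_le_sq.mp (by nlinarith)
    calc (h₁ - h₂) ^ 2 = |h₁ - h₂| * |h₁ - h₂| := by rw [abs_mul_abs_self, sq]
      _ ≤ |h₁ - h₂| * |h₁ + h₂| := by gcongr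
      _ = |g₂ - g₁| * |g₂ + g₁| := by
        rw [← abs_mul, ← abs_mul]; congr 1; linear_combination hR
  have hdiff : |g₂ - g₁| ≤ 2 * δ := abs_sub_le_iff.mpr ⟨by linarith, by linarith⟩
  have hsum : |g₂ + g₁| ≤ 3 * c := abs_le.mpr ⟨by linarith, by linarith⟩
  nlinarith [mul_le_mul hdiff hsum (abs_nonneg _) (by linarith)]

lemma sinusoid_sq_add_sq (a b θ : ℝ) :
    (a * cos θ + b * sin θ) ^ 2 + (b * cos θ - a * sin θ) ^ 2 = a ^ 2 + b ^ 2 := by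
  linear_combination (a ^ 2 + b ^ 2) * sin_sq_add_cos_sq θ

lemma sinusoid_dist_sq (a b θ ψ : ℝ) :
    (a * cos θ + b * sin θ - (a * cos ψ + b * sin ψ)) ^ 2
      + (b * cos θ - a * sin θ - (b * cos ψ - a * sin ψ)) ^ 2
    = (a ^ 2 + b ^ 2) * (2 - 2 * cos (θ - ψ)) := by
  rw [cos_sub]
  linear_combination (a ^ 2 + b ^ 2) * (sin_sq_add_cos_sq θ + sin_sq_add_cos_sq ψ)

/-- The sign of `b cos θ - a sin θ` tells on which side of the maximum of the sinusoid
`a cos θ + b sin θ` the angle `θ` lies. -/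
lemma mul_two_sub_two_cos_sub_le {a b c δ θ ψ : ℝ} (hδc : 2 * δ ≤ c)
    (hθ : |a * cos θ + b * sin θ - c| ≤ δ) (hψ : |a * cos ψ + b * sin ψ - c| ≤ δ)
    (hside : 0 ≤ (b * cos θ - a * sin θ) * (b * cos ψ - a * sin ψ)) :
    c * (2 - 2 * cos (θ - ψ)) ≤ 32 * δ := by
  have hdist := sq_sub_add_sq_sub_le_of_abs_sub_le hδc hθ hψ
    ((sinusoid_sq_add_sq a b θ).trans (sinusoid_sq_add_sq a b ψ).symm) hside
  rw [sinusoid_dist_sq] at hdist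
  have hδ : 0 ≤ δ := (abs_nonneg _).trans hθ
  have hR : c ^ 2 / 4 ≤ a ^ 2 + b ^ 2 := by
    rw [← sinusoid_sq_add_sq a b θ]
    nlinarith [(abs_le.mp hθ).1]
  have hcos : 0 ≤ 2 - 2 * cos (θ - ψ) := by linarith [cos_le_one (θ - ψ)]
  rcases (show 0 ≤ c by linarith).eq_or_lt with hc | hc
  · rw [← hc]; linarith
  · refine le_of_mul_le_mul_left ?_ hc
    nlinarith [mul_le_mul_of_nonneg_right hR hcos]

lemma four_mul_sq_le_pi_sq_mul_two_sub_two_cos {Δ s : ℝ} (hΔ : 0 ≤ Δ) (hΔs : Δ ≤ |s|)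
    (hsπ : |s| ≤ π) : 4 * Δ ^ 2 ≤ π ^ 2 * (2 - 2 * cos s) := by
  have hπ : 0 < π ^ 2 := by positivity
  have hcos := mul_le_mul_of_nonneg_left (cos_le_one_sub_mul_cos_sq hsπ) hπ.le
  rw [mul_sub, mul_one, ← mul_assoc, mul_div_cancel₀ _ hπ.ne'] at hcos
  have hsq : Δ ^ 2 ≤ s ^ 2 := by rw [← sq_abs s]; gcongr
  linarith

lemma one_le_abs_natCast_sub_natCast {p q : ℕ} (hpq : p ≠ q) : 1 ≤ |(p : ℝ) - q| := by
  rcases Nat.lt_or_gt_of_ne hpq with h | h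
  · have : (p : ℝ) + 1 ≤ q := by exact_mod_cast h
    rw [abs_sub_comm, abs_of_pos (by linarith)]; linarith
  · have : (q : ℝ) + 1 ≤ p := by exact_mod_cast h
    rw [abs_of_pos (by linarith)]; linarith

lemma abs_natCast_sub_natCast_le {p q n : ℕ} (hp : p ≤ n) (hq : q ≤ n) :
    |(p : ℝ) - q| ≤ n := by
  have hp' : (p : ℝ) ≤ n := by exact_mod_cast hp
  have hq' : (q : ℝ) ≤ n := by exact_mod_cast hq
  exact abs_sub_le_iff.mpr ⟨by linarith [q.cast_nonneg (α := ℝ)],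
    by linarith [p.cast_nonneg (α := ℝ)]⟩

lemma card_filter_abs_sinusoid_sub_le_two (a b c : ℝ) {Δ δ : ℝ} {n : ℕ} (hΔ : 0 < Δ)
    (hnΔ : n * Δ ≤ π) (hδ : 0 ≤ δ) (hδc : 8 * π ^ 2 * δ < c * Δ ^ 2) :
    #((range (n + 1)).filter fun k : ℕ => |a * cos (k * Δ) + b * sin (k * Δ) - c| ≤ δ) ≤ 2 := by
  set side : ℕ → ℝ := fun k => b * cos (k * Δ) - a * sin (k * Δ)
  refine (card_le_card_of_injOn (fun k => decide (0 ≤ side k)) (t := univ)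
    (fun _ _ => mem_coe.mpr (mem_univ _)) ?_).trans_eq (by rw [card_univ, Fintype.card_bool])
  intro p hp q hq hpq
  by_contra hne
  simp only [coe_filter, mem_range, Set.mem_ofPred_eq, Nat.lt_succ_iff] at hp hq
  have hside : 0 ≤ side p * side q := by
    by_cases h : 0 ≤ side p <;> simp only [h, decide_true, decide_false] at hpq
    · exact mul_nonneg h (of_decide_eq_true hpq.symm)
    · exact mul_nonneg_of_nonpos_of_nonpos (not_le.mp h).le
        (not_le.mp (of_decide_eq_false hpq.symm)).le
  have hangle : |(p : ℝ) * Δ - q * Δ| = |(p : ℝ) - q| * Δ := by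
    rw [← sub_mul, abs_mul, abs_of_pos hΔ]
  have hΔle : Δ ≤ |(p : ℝ) * Δ - q * Δ| := by
    rw [hangle]; nlinarith [one_le_abs_natCast_sub_natCast hne]
  have hleπ : |(p : ℝ) * Δ - q * Δ| ≤ π := by
    rw [hangle]; exact le_trans (by gcongr; exact abs_natCast_sub_natCast_le hp.1 hq.1) hnΔ
  have hc : 0 < c := by nlinarith [sq_pos_of_pos hΔ, pi_pos]
  have hδc' : 2 * δ ≤ c := by
    have : c * Δ ^ 2 ≤ c * π ^ 2 := by gcongr; linarith
    nlinarith [pi_pos]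
  have hupper := mul_two_sub_two_cos_sub_le hδc' hp.2 hq.2 hside
  have hlower := four_mul_sq_le_pi_sq_mul_two_sub_two_cos hΔ.le hΔle hleπ
  nlinarith

lemma exists_forall_lt_abs_sinusoid_sub {ι : Type*} [Fintype ι] (a b c : ι → ℝ) {Δ δ : ℝ}
    (hΔ : 0 < Δ) (hΔπ : 2 * Fintype.card ι * Δ ≤ π) (hδ : 0 ≤ δ)
    (hδc : ∀ i, 8 * π ^ 2 * δ < c i * Δ ^ 2) :
    ∃ k ∈ range (2 * Fintype.card ι + 1),
      ∀ i, δ < |a i * cos (k * Δ) + b i * sin (k * Δ) - c i| := by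
  classical
  let bad : ι → Finset ℕ := fun i => (range (2 * Fintype.card ι + 1)).filter
    fun k : ℕ => |a i * cos (k * Δ) + b i * sin (k * Δ) - c i| ≤ δ
  have hcard : #(univ.biUnion bad) < #(range (2 * Fintype.card ι + 1)) := by
    refine (card_biUnion_le_card_mul _ _ 2 fun i _ => ?_).trans_lt ?_
    · exact card_filter_abs_sinusoid_sub_le_two _ _ _ hΔ (by push_cast; exact hΔπ) hδ (hδc i)
    · rw [card_univ, card_range]; omega
  obtain ⟨k, hk, hkbad⟩ := exists_mem_notMem_of_card_lt_card hcard
  refine ⟨k, hk, fun i => not_le.mp fun hki => hkbad ?_⟩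
  exact mem_biUnion.mpr ⟨i, mem_univ i, mem_filter.mpr ⟨hk, hki⟩⟩

section Sphere

variable {E : Type*} [NormedAddCommGroup E] [InnerProductSpace ℝ E]

lemma norm_sub_sq_eq_two_sub_two_inner {w v : E} (hw : ‖w‖ = 1) (hv : ‖v‖ = 1) :
    ‖w - v‖ ^ 2 = 2 - 2 * ⟪w, v⟫ := by
  rw [norm_sub_sq_real, hw, hv]; ring

lemma lt_norm_sub_of_inner_lt {w v : E} {ρ : ℝ} (hw : ‖w‖ = 1) (hv : ‖v‖ = 1)
    (h : ⟪w, v⟫ < 1 - ρ ^ 2 / 2) : ρ < ‖w - v‖ := by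
  refine lt_of_pow_lt_pow_left₀ 2 (norm_nonneg _) ?_
  rw [norm_sub_sq_eq_two_sub_two_inner hw hv]; linarith

lemma lt_norm_sub_of_lt_abs_inner_sub {w w' v : E} {ρ δ : ℝ} (hv : ‖v‖ = 1) (hw' : ‖w'‖ = 1)
    (hw'v : ‖w' - v‖ = ρ) (h : δ < |⟪w, v⟫ - (1 - ρ ^ 2 / 2)|) : δ < ‖w - w'‖ := by
  have hinner : ⟪w', v⟫ = 1 - ρ ^ 2 / 2 := by
    have := norm_sub_sq_eq_two_sub_two_inner hw' hv; rw [hw'v] at this; linarith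
  calc δ < |⟪w - w', v⟫| := by rwa [inner_sub_left, hinner]
    _ ≤ ‖w - w'‖ := by simpa [hv] using abs_real_inner_le_norm (w - w') v

lemma lt_norm_sub_and_forall_lt_norm_sub_of_inner_add_lt {w v : E} {ρ δ : ℝ} (hw : ‖w‖ = 1)
    (hv : ‖v‖ = 1) (hδ : 0 ≤ δ) (h : ⟪w, v⟫ + δ < 1 - ρ ^ 2 / 2) :
    ρ < ‖w - v‖ ∧ ∀ ⦃w'⦄, ‖w'‖ = 1 → ‖w' - v‖ = ρ → δ < ‖w - w'‖ :=
  ⟨lt_norm_sub_of_inner_lt hw hv (by linarith), fun _ hw' hw'v =>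
    lt_norm_sub_of_lt_abs_inner_sub hv hw' hw'v (lt_abs.mpr (Or.inr (by linarith)))⟩

lemma exists_mem_ne_zero_inner_eq_zero {P : Submodule ℝ E} (hP : 1 < finrank ℝ P) (v : E) :
    ∃ x ∈ P, x ≠ 0 ∧ ⟪x, v⟫ = 0 := by
  have : FiniteDimensional ℝ P := Module.finite_of_finrank_pos (by omega)
  let φ : P →ₗ[ℝ] ℝ := (innerSL ℝ v).toLinearMap ∘ₗ P.subtype
  obtain ⟨x, hx, hx0⟩ := Submodule.exists_mem_ne_zero_of_ne_bot
    (LinearMap.ker_ne_bot_of_finrank_lt (f := φ) (by rwa [finrank_self]))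
  refine ⟨x, x.2, by simpa using hx0, ?_⟩
  rw [real_inner_comm]; exact hx

lemma exists_orthonormal_pair_inner_eq_zero {P : Submodule ℝ E} (hP : finrank ℝ P = 2)
    (v : E) : ∃ e₀ ∈ P, ∃ e₁ ∈ P, ‖e₀‖ = 1 ∧ ‖e₁‖ = 1 ∧ ⟪e₀, e₁⟫ = 0 ∧ ⟪e₀, v⟫ = 0 := by
  obtain ⟨x, hxP, hx0, hxv⟩ := exists_mem_ne_zero_inner_eq_zero (P := P) (by omega) v
  obtain ⟨y, hyP, hy0, hyx⟩ := exists_mem_ne_zero_inner_eq_zero (P := P) (by omega) x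
  refine ⟨‖x‖⁻¹ • x, P.smul_mem _ hxP, ‖y‖⁻¹ • y, P.smul_mem _ hyP, norm_smul_inv_norm hx0,
    norm_smul_inv_norm hy0, ?_, ?_⟩
  · rw [real_inner_smul_left, real_inner_smul_right, real_inner_comm, hyx]; simp
  · rw [real_inner_smul_left, hxv, mul_zero]

variable {e₀ e₁ : E}

lemma inner_cos_smul_add_sin_smul (θ : ℝ) (v : E) :
    ⟪cos θ • e₀ + sin θ • e₁, v⟫ = ⟪e₀, v⟫ * cos θ + ⟪e₁, v⟫ * sin θ := by
  rw [inner_add_left, real_inner_smul_left, real_inner_smul_left]; ring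

lemma norm_cos_smul_add_sin_smul (h₀ : ‖e₀‖ = 1) (h₁ : ‖e₁‖ = 1) (h₀₁ : ⟪e₀, e₁⟫ = 0)
    (θ : ℝ) : ‖cos θ • e₀ + sin θ • e₁‖ = 1 := by
  have hpyth := norm_add_sq_eq_norm_sq_add_norm_sq_real (x := cos θ • e₀) (y := sin θ • e₁)
    (by rw [real_inner_smul_left, real_inner_smul_right, h₀₁]; ring)
  rw [norm_smul, norm_smul, h₀, h₁, Real.norm_eq_abs, Real.norm_eq_abs] at hpyth
  refine (pow_eq_one_iff_of_nonneg (norm_nonneg _) two_ne_zero).mp ?_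
  nlinarith [sin_sq_add_cos_sq θ, sq_abs (sin θ), sq_abs (cos θ)]

lemma abs_inner_cos_smul_add_sin_smul_le {v : E} (h₁ : ‖e₁‖ = 1) (hv : ‖v‖ = 1)
    (h₀v : ⟪e₀, v⟫ = 0) (θ : ℝ) : |⟪cos θ • e₀ + sin θ • e₁, v⟫| ≤ |θ| := by
  rw [inner_cos_smul_add_sin_smul, h₀v, zero_mul, zero_add, abs_mul]
  have hcs : |⟪e₁, v⟫| ≤ 1 := by simpa [h₁, hv] using abs_real_inner_le_norm e₁ v
  calc |⟪e₁, v⟫| * |sin θ| ≤ 1 * |θ| := mul_le_mul hcs abs_sin_le_abs (abs_nonneg _) zero_le_one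
    _ = |θ| := one_mul _

lemma exists_unit_mem_abs_inner_le_and_forall_lt_abs_inner_sub {ι : Type*} [Fintype ι]
    {P : Submodule ℝ E} (hP : finrank ℝ P = 2) {v₀ : E} (hv₀ : ‖v₀‖ = 1) (v : ι → E)
    (c : ι → ℝ) {Δ δ : ℝ} (hΔ : 0 < Δ)
    (hΔπ : 2 * Fintype.card ι * Δ ≤ π) (hδ : 0 ≤ δ) (hδc : ∀ i, 8 * π ^ 2 * δ < c i * Δ ^ 2) :
    ∃ w ∈ P, ‖w‖ = 1 ∧ |⟪w, v₀⟫| ≤ 2 * Fintype.card ι * Δ ∧ ∀ i, δ < |⟪w, v i⟫ - c i| := by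
  obtain ⟨e₀, he₀P, e₁, he₁P, he₀, he₁, he₀₁, he₀v₀⟩ := exists_orthonormal_pair_inner_eq_zero hP v₀
  obtain ⟨k, hk, hgood⟩ := exists_forall_lt_abs_sinusoid_sub (fun i => ⟪e₀, v i⟫)
    (fun i => ⟪e₁, v i⟫) c hΔ hΔπ hδ hδc
  have hk' : (k : ℝ) ≤ 2 * Fintype.card ι := by
    exact_mod_cast Nat.lt_succ_iff.mp (mem_range.mp hk)
  refine ⟨cos (k * Δ) • e₀ + sin (k * Δ) • e₁, P.add_mem (P.smul_mem _ he₀P) (P.smul_mem _ he₁P),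
    norm_cos_smul_add_sin_smul he₀ he₁ he₀₁ _, ?_, fun i => ?_⟩
  · refine (abs_inner_cos_smul_add_sin_smul_le he₁ hv₀ he₀v₀ _).trans ?_
    rw [abs_of_nonneg (by positivity)]; gcongr
  · rw [inner_cos_smul_add_sin_smul]; exact hgood i

end Sphere

theorem flagwise_stmt4_general (E : Type*) [NormedAddCommGroup E] [InnerProductSpace ℝ E]
    (u₀ : E) (hu₀ : ‖u₀‖ = 1) (r₀ : ℝ) (hr₀ : r₀ ∈ Set.Ioo (0 : ℝ) 1)
    (m : ℕ) (u : Fin m → E) (hu : ∀ i, ‖u i‖ = 1)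
    (r : Fin m → ℝ) (hr : ∀ i, r i ∈ Set.Ioo (0 : ℝ) (Real.sqrt 2))
    (S' : Set E)
    (hS' : S' = {w : E | ‖w‖ = 1 ∧ ‖w - u₀‖ = r₀} ∪ {w : E | ‖w‖ = 1 ∧ ‖w + u₀‖ = r₀}
      ∪ ⋃ i : Fin m, {w : E | ‖w‖ = 1 ∧ ‖w - u i‖ = r i}) :
    ∃ δ > 0, ∀ P : Submodule ℝ E, Module.finrank ℝ P = 2 →
      ∃ w ∈ P, ‖w‖ = 1 ∧ r₀ < ‖w - u₀‖ ∧ r₀ < ‖w + u₀‖ ∧ ∀ w' ∈ S', δ < ‖w - w'‖ := by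
  set c₀ := 1 - r₀ ^ 2 / 2 with hc₀def
  have hc₀ : 0 < c₀ ∧ c₀ ≤ 1 := by constructor <;> nlinarith [hr₀.1, hr₀.2]
  set Δ := c₀ / (4 * m + 1)
  have hΔ : 0 < Δ := div_pos (by linarith) (by positivity)
  have hmΔ : 2 * m * Δ ≤ c₀ / 2 := by
    rw [mul_div_assoc', div_le_div_iff₀ (by positivity) two_pos]; nlinarith
  have hc : ∀ i, 0 < (1 - r i ^ 2 / 2) * Δ ^ 2 / (8 * π ^ 2) := fun i => by
    have := (lt_sqrt (hr i).1.le).mp (hr i).2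
    have : 0 < 1 - r i ^ 2 / 2 := by linarith
    positivity
  obtain ⟨δ, hδ, hδc₀, hδc⟩ := exists_pos_lt_and_forall_lt (by linarith : 0 < c₀ / 2) hc
  refine ⟨δ, hδ, fun P hP => ?_⟩
  obtain ⟨w, hwP, hw, hwu₀, hwu⟩ := exists_unit_mem_abs_inner_le_and_forall_lt_abs_inner_sub hP
    hu₀ u _ hΔ (by rw [Fintype.card_fin]; linarith [pi_gt_three]) hδ.le
    fun i => (lt_div_iff₀' (by positivity)).mp (hδc i)
  rw [Fintype.card_fin] at hwu₀
  obtain ⟨hwu₀l, hwu₀r⟩ := abs_le.mp (hwu₀.trans hmΔ)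
  obtain ⟨hsub, hsub'⟩ := lt_norm_sub_and_forall_lt_norm_sub_of_inner_add_lt (ρ := r₀) hw hu₀
    hδ.le (by linarith)
  obtain ⟨hadd, hadd'⟩ := lt_norm_sub_and_forall_lt_norm_sub_of_inner_add_lt (ρ := r₀) hw
    ((norm_neg u₀).trans hu₀) hδ.le (by rw [inner_neg_right]; linarith)
  simp only [sub_neg_eq_add] at hadd hadd'
  refine ⟨w, hwP, hw, hsub, hadd, ?_⟩
  rw [hS']
  rintro w' ((⟨hw', hw'u⟩ | ⟨hw', hw'u⟩) | hw')
  · exact hsub' hw' hw'u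
  · exact hadd' hw' hw'u
  · obtain ⟨i, hw', hw'u⟩ := Set.mem_iUnion.mp hw'
    exact lt_norm_sub_of_lt_abs_inner_sub (hu i) hw' hw'u (hwu i)

/-- paper's Lemma 2. Let `E` be a real inner product space with
`3 ≤ dim E < ∞` and unit sphere `S`. Let `u₀ ∈ S`, `r₀ ∈ (0,1)`, and `u₁, …, u_m ∈ S`
with radii `r₁, …, r_m ∈ (0, √2)`. Let `S'` be the union of the cap boundaries
`{w ∈ S : ‖w - u₀‖ = r₀}`, `{w ∈ S : ‖w + u₀‖ = r₀}` and `{w ∈ S : ‖w - u_i‖ = r_i}`.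
Then there exists `δ > 0` such that every two-dimensional subspace `P ⊆ E` contains
a unit vector `w` with `‖w - u₀‖ > r₀`, `‖w + u₀‖ > r₀`, and `‖w - w'‖ > δ` for all
`w' ∈ S'`. -/
theorem flagwise_stmt4 (E : Type*) [NormedAddCommGroup E] [InnerProductSpace ℝ E]
    [FiniteDimensional ℝ E] (hdim : 3 ≤ Module.finrank ℝ E)
    (u₀ : E) (hu₀ : ‖u₀‖ = 1) (r₀ : ℝ) (hr₀ : r₀ ∈ Set.Ioo (0 : ℝ) 1)
    (m : ℕ) (u : Fin m → E) (hu : ∀ i, ‖u i‖ = 1)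
    (r : Fin m → ℝ) (hr : ∀ i, r i ∈ Set.Ioo (0 : ℝ) (Real.sqrt 2))
    (S' : Set E)
    (hS' : S' = {w : E | ‖w‖ = 1 ∧ ‖w - u₀‖ = r₀} ∪ {w : E | ‖w‖ = 1 ∧ ‖w + u₀‖ = r₀}
      ∪ ⋃ i : Fin m, {w : E | ‖w‖ = 1 ∧ ‖w - u i‖ = r i}) :
    ∃ δ > 0, ∀ P : Submodule ℝ E, Module.finrank ℝ P = 2 →
      ∃ w ∈ P, ‖w‖ = 1 ∧ r₀ < ‖w - u₀‖ ∧ r₀ < ‖w + u₀‖ ∧ ∀ w' ∈ S', δ < ‖w - w'‖ :=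
  flagwise_stmt4_general E u₀ hu₀ r₀ hr₀ m u hu r hr S' hS'
end

section
/- Let E be a finite-dimensional real inner product space with unit sphere S, and let C ⊆ S be a compact subset such that no great circle of E is contained in C (i.e. for every two-dimensional linear subspace P of E, S ∩ P is not a subset of C). Then there exists δ > 0 such that every two-dimensional linear subspace P of E contains a unit vector w with ‖w − w'‖ > δ for every w' ∈ C. -/
/-!
Every 2-plane is the image of a linear isometric embedding `L : ℝ² → E`, and these
embeddings form a compact subset of the finite-dimensional space of linear maps. Since no
great circle lies in `C`, each such `L` sends some unit vector `x` to a point with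
`infDist (L x) C > 0`, and for fixed `x` this quantity depends continuously on `L`.
Compactness makes the bound uniform in `L`.
-/

open Metric Set Module

theorem IsCompact.exists_pos_forall_exists_lt {X T : Type*} [TopologicalSpace X] {K : Set X}
    (hK : IsCompact K) {f : T → X → ℝ} (hf : ∀ t, LowerSemicontinuous (f t))
    (hpos : ∀ x ∈ K, ∃ t, 0 < f t x) : ∃ δ > 0, ∀ x ∈ K, ∃ t, δ < f t x := by
  let U : ℕ → Set X := fun n => ⋃ t, {x | 1 / ((n : ℝ) + 1) < f t x}
  have hU_open : ∀ n, IsOpen (U n) := fun n => isOpen_iUnion fun t => (hf t).isOpen_preimage _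
  have hU_mono : Monotone U := fun m n hmn x hx => by
    simp only [U, mem_iUnion, mem_ofPred_eq] at hx ⊢
    obtain ⟨t, ht⟩ := hx
    exact ⟨t, (Nat.one_div_le_one_div hmn).trans_lt ht⟩
  have hKU : K ⊆ ⋃ n, U n := fun x hx => by
    obtain ⟨t, ht⟩ := hpos x hx
    obtain ⟨n, hn⟩ := exists_nat_one_div_lt ht
    exact mem_iUnion.mpr ⟨n, mem_iUnion.mpr ⟨t, hn⟩⟩
  obtain ⟨n, hn⟩ := hK.elim_directed_cover U hU_open hKU hU_mono.directed_le
  exact ⟨1 / ((n : ℝ) + 1), Nat.one_div_pos_of_nat, fun x hx => mem_iUnion.mp (hn hx)⟩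

section Isometries

variable {F E : Type*} [NormedAddCommGroup F] [NormedAddCommGroup E]

theorem isCompact_setOf_forall_norm_apply_eq [NormedSpace ℝ F] [FiniteDimensional ℝ F]
    [NormedSpace ℝ E] [FiniteDimensional ℝ E] :
    IsCompact {L : F →L[ℝ] E | ∀ x, ‖L x‖ = ‖x‖} := by
  refine isCompact_of_isClosed_isBounded ?_ ((isBounded_closedBall (x := 0) (r := 1)).subset ?_)
  · simp only [ofPred_forall]
    exact isClosed_iInter fun x => isClosed_eq (continuous_eval_const x).norm continuous_const
  · intro L hL
    exact mem_closedBall_zero_iff.mpr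
      (L.opNorm_le_bound zero_le_one fun x => (hL x).le.trans (one_mul _).ge)

theorem finrank_range_of_forall_norm_apply_eq [NormedSpace ℝ F] [NormedSpace ℝ E]
    {L : F →L[ℝ] E} (hL : ∀ x, ‖L x‖ = ‖x‖) :
    finrank ℝ (LinearMap.range L.toLinearMap) = finrank ℝ F :=
  LinearMap.finrank_range_of_inj (⟨L.toLinearMap, hL⟩ : F →ₗᵢ[ℝ] E).injective

theorem Submodule.exists_forall_norm_apply_eq_of_finrank_eq [InnerProductSpace ℝ E]
    [FiniteDimensional ℝ E] (P : Submodule ℝ E) {n : ℕ} (hP : finrank ℝ P = n) :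
    ∃ L : EuclideanSpace ℝ (Fin n) →L[ℝ] E, (∀ x, ‖L x‖ = ‖x‖) ∧ ∀ x, L x ∈ P := by
  let e := ((stdOrthonormalBasis ℝ P).reindex (finCongr hP)).repr
  exact ⟨(P.subtypeₗᵢ.comp e.symm.toLinearIsometry).toContinuousLinearMap,
    fun x => (P.subtypeₗᵢ.comp e.symm.toLinearIsometry).norm_map x, fun x => (e.symm x).2⟩

end Isometries

local notation "ℝ²" => EuclideanSpace ℝ (Fin 2)

theorem flagwise_stmt5_general (E : Type*) [NormedAddCommGroup E] [InnerProductSpace ℝ E]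
    [FiniteDimensional ℝ E]
    (C : Set E) (hCcpt : IsCompact C)
    (hgc : ∀ P : Submodule ℝ E, Module.finrank ℝ P = 2 →
      ¬ ({w : E | ‖w‖ = 1} ∩ (P : Set E) ⊆ C)) :
    ∃ δ > 0, ∀ P : Submodule ℝ E, Module.finrank ℝ P = 2 →
      ∃ w ∈ P, ‖w‖ = 1 ∧ ∀ w' ∈ C, δ < ‖w - w'‖ := by
  -- `infDist` to the empty set is `0`, so this case is not covered by the argument below.
  rcases C.eq_empty_or_nonempty with rfl | hC
  · refine ⟨1, one_pos, fun P hP => ?_⟩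
    have : Nontrivial P := Module.nontrivial_of_finrank_eq_succ hP
    obtain ⟨w, hw⟩ := exists_norm_eq P zero_le_one
    exact ⟨w, w.2, hw, by simp⟩
  have hpos : ∀ L ∈ {L : ℝ² →L[ℝ] E | ∀ x, ‖L x‖ = ‖x‖},
      ∃ x : sphere (0 : ℝ²) 1, 0 < infDist (L x) C := by
    intro L hL
    have hrank : finrank ℝ (LinearMap.range L.toLinearMap) = 2 := by
      rw [finrank_range_of_forall_norm_apply_eq hL, finrank_euclideanSpace_fin]
    obtain ⟨w, ⟨hw, x, rfl⟩, hwC⟩ := not_subset.mp (hgc _ hrank)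
    exact ⟨⟨x, by simpa [hL x] using hw⟩,
      (hCcpt.isClosed.notMem_iff_infDist_pos hC).mp hwC⟩
  have hcont (x : sphere (0 : ℝ²) 1) :
      LowerSemicontinuous fun L : ℝ² →L[ℝ] E => infDist (L x) C :=
    ((continuous_infDist_pt C).comp (continuous_eval_const (x : ℝ²))).lowerSemicontinuous
  obtain ⟨δ, hδ, hδK⟩ :=
    isCompact_setOf_forall_norm_apply_eq.exists_pos_forall_exists_lt hcont hpos
  refine ⟨δ, hδ, fun P hP => ?_⟩
  obtain ⟨L, hL, hLP⟩ := P.exists_forall_norm_apply_eq_of_finrank_eq hP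
  obtain ⟨x, hx⟩ := hδK L hL
  refine ⟨L x, hLP x, by rw [hL, norm_eq_of_mem_sphere x], fun w' hw' => hx.trans_le ?_⟩
  rw [← dist_eq_norm]
  exact infDist_le_dist_of_mem hw'

/-- Let `E` be a finite-dimensional real inner product space with unit
sphere `S`, and let `C ⊆ S` be compact such that no great circle `S ∩ P` (with `P` a
two-dimensional subspace) is contained in `C`. Then there is `δ > 0` such that every
two-dimensional subspace `P` contains a unit vector `w` with `‖w - w'‖ > δ` for every
`w' ∈ C`. -/
theorem flagwise_stmt5 (E : Type*) [NormedAddCommGroup E] [InnerProductSpace ℝ E]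
    [FiniteDimensional ℝ E]
    (C : Set E) (hCcpt : IsCompact C) (hCS : C ⊆ {w : E | ‖w‖ = 1})
    (hgc : ∀ P : Submodule ℝ E, Module.finrank ℝ P = 2 →
      ¬ ({w : E | ‖w‖ = 1} ∩ (P : Set E) ⊆ C)) :
    ∃ δ > 0, ∀ P : Submodule ℝ E, Module.finrank ℝ P = 2 →
      ∃ w ∈ P, ‖w‖ = 1 ∧ ∀ w' ∈ C, δ < ‖w - w'‖ :=
  flagwise_stmt5_general E C hCcpt hgc
end

section
/- Let E be a real inner product space, let u₀, u₁, …, u_m ∈ E be unit vectors, let r₀ ∈ (0,1) and r₁, …, r_m ∈ (0, √2). Then for every two-dimensional linear subspace P of E there exists a unit vector w ∈ P such that ‖w − u₀‖ > r₀, ‖w + u₀‖ > r₀, and ‖w − u_i‖ ≠ r_i for every i = 1, …, m. -/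
/-!
Choose unit vectors `e₁ ⊥ u₀` and `e₂ ⊥ e₁` in `P` and parametrize the great circle of `P`
rationally by `t ↦ ((1 - t²) e₁ + 2t e₂) / (1 + t²)`. For unit vectors, `‖w - u‖² = 2 - 2⟪w, u⟫`,
so the cap boundary `‖w - uᵢ‖ = rᵢ` is the level set `⟪w, uᵢ⟫ = 1 - rᵢ²/2 ≠ 0`, which pulls back
to the roots of a nonzero quadratic in `t`; only finitely many `t` are bad. For `0 < t < 1/4`
the point is so close to `e₁` that `|⟪w, u₀⟫| < 1/2`, hence `‖w ± u₀‖ > 1 > r₀`.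
-/

open scoped RealInnerProductSpace

theorem Set.finite_setOf_quadratic_eq_zero {a b c : ℝ} (h : a ≠ 0 ∨ c ≠ 0) :
    {t : ℝ | a * t ^ 2 + b * t + c = 0}.Finite := by
  open Polynomial in
  have hp : C a * X ^ 2 + C b * X + C c ≠ 0 := by
    intro h0
    have h2 := congrArg (coeff · 2) h0
    have h0 := congrArg (coeff · 0) h0
    simp at h2 h0
    tauto
  refine (finite_setOfPred_isRoot hp).subset fun t ht => ?_
  simpa using ht

section InnerProductSpace

variable {E : Type*} [NormedAddCommGroup E] [InnerProductSpace ℝ E]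

theorem Submodule.exists_mem_norm_eq_one_inner_eq_zero (P : Submodule ℝ E)
    (hP : 1 < Module.finrank ℝ P) (x : E) : ∃ e ∈ P, ‖e‖ = 1 ∧ ⟪e, x⟫ = 0 := by
  set f : P →ₗ[ℝ] ℝ := (innerₛₗ ℝ x).comp P.subtype
  have hker : LinearMap.ker f ≠ ⊥ := by
    intro hbot
    have := LinearMap.finrank_le_finrank_of_injective (LinearMap.ker_eq_bot.mp hbot)
    rw [Module.finrank_self] at this
    omega
  obtain ⟨v, hv, hv0⟩ := Submodule.exists_mem_ne_zero_of_ne_bot hker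
  have hv0' : (v : E) ≠ 0 := by simpa using hv0
  refine ⟨‖(v : E)‖⁻¹ • (v : E), P.smul_mem _ v.2, norm_smul_inv_norm hv0', ?_⟩
  have hxv : ⟪x, (v : E)⟫ = 0 := LinearMap.mem_ker.mp hv
  rw [real_inner_smul_left, real_inner_comm, hxv, mul_zero]

theorem norm_sub_sq_eq_two_sub_inner {w u : E} (hw : ‖w‖ = 1) (hu : ‖u‖ = 1) :
    ‖w - u‖ ^ 2 = 2 - 2 * ⟪w, u⟫ := by
  rw [norm_sub_sq_real, hw, hu]
  ring

theorem one_lt_norm_sub_of_inner_lt {w u : E} (hw : ‖w‖ = 1) (hu : ‖u‖ = 1)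
    (h : ⟪w, u⟫ < 1 / 2) : 1 < ‖w - u‖ := by
  have := norm_sub_sq_eq_two_sub_inner hw hu
  nlinarith [norm_nonneg (w - u)]

/-- The stereographic parametrization of the unit circle of `span {e₁, e₂}`, with `0 ↦ e₁`. -/
noncomputable def circleParam (e₁ e₂ : E) (t : ℝ) : E :=
  ((1 - t ^ 2) / (1 + t ^ 2)) • e₁ + (2 * t / (1 + t ^ 2)) • e₂

variable {e₁ e₂ : E}

theorem circleParam_mem {P : Submodule ℝ E} (h₁ : e₁ ∈ P) (h₂ : e₂ ∈ P) (t : ℝ) :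
    circleParam e₁ e₂ t ∈ P :=
  P.add_mem (P.smul_mem _ h₁) (P.smul_mem _ h₂)

theorem inner_circleParam (t : ℝ) (x : E) :
    ⟪circleParam e₁ e₂ t, x⟫ = ((1 - t ^ 2) * ⟪e₁, x⟫ + 2 * t * ⟪e₂, x⟫) / (1 + t ^ 2) := by
  simp only [circleParam, inner_add_left, real_inner_smul_left]
  field_simp

theorem norm_circleParam (h₁ : ‖e₁‖ = 1) (h₂ : ‖e₂‖ = 1) (h₁₂ : ⟪e₁, e₂⟫ = 0) (t : ℝ) :
    ‖circleParam e₁ e₂ t‖ = 1 := by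
  have hsq : ‖circleParam e₁ e₂ t‖ ^ 2 = 1 := by
    rw [circleParam, norm_add_sq_real, real_inner_smul_left, real_inner_smul_right, h₁₂,
      norm_smul, norm_smul, h₁, h₂, Real.norm_eq_abs, Real.norm_eq_abs, mul_one, mul_one,
      sq_abs, sq_abs]
    field_simp
    ring
  exact (pow_eq_one_iff_of_nonneg (norm_nonneg _) two_ne_zero).mp hsq

theorem abs_inner_circleParam_le (h₂ : ‖e₂‖ = 1) {x : E} (hx : ‖x‖ = 1) (h₁x : ⟪e₁, x⟫ = 0)
    (t : ℝ) : |⟪circleParam e₁ e₂ t, x⟫| ≤ 2 * |t| := by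
  have hden : 1 ≤ 1 + t ^ 2 := by nlinarith
  have h₂x : |⟪e₂, x⟫| ≤ 1 := by simpa [h₂, hx] using abs_real_inner_le_norm e₂ x
  rw [inner_circleParam, h₁x, abs_div, abs_of_pos (show 0 < 1 + t ^ 2 by positivity),
    div_le_iff₀ (by positivity)]
  calc |(1 - t ^ 2) * 0 + 2 * t * ⟪e₂, x⟫| = 2 * |t| * |⟪e₂, x⟫| := by
        rw [mul_zero, zero_add, abs_mul, abs_mul, abs_two]
    _ ≤ 2 * |t| * (1 + t ^ 2) := by gcongr; linarith

/-- A nonzero level set of `⟪·, x⟫` meets the circle in at most two points; in the parameter it is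
the root set of `(c + a) t² - 2 b t + (c - a)` with `a = ⟪e₁, x⟫`, `b = ⟪e₂, x⟫`. -/
theorem finite_setOf_inner_circleParam_eq (x : E) {c : ℝ} (hc : c ≠ 0) :
    {t | ⟪circleParam e₁ e₂ t, x⟫ = c}.Finite := by
  have hcoeff : c + ⟪e₁, x⟫ ≠ 0 ∨ c - ⟪e₁, x⟫ ≠ 0 := by
    by_contra! h
    exact hc (by linarith [h.1, h.2])
  refine (Set.finite_setOf_quadratic_eq_zero (b := -(2 * ⟪e₂, x⟫)) hcoeff).subset fun t ht => ?_
  have hden : 0 < 1 + t ^ 2 := by positivity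
  rw [Set.mem_ofPred_eq, inner_circleParam, div_eq_iff hden.ne'] at ht
  simp only [Set.mem_ofPred_eq]
  linear_combination -ht

end InnerProductSpace

/-- Let `E` be a real inner product space, `u₀, u₁, …, u_m` unit
vectors, `r₀ ∈ (0,1)` and `r₁, …, r_m ∈ (0,√2)`. Then every two-dimensional subspace
`P ⊆ E` contains a unit vector `w` with `‖w - u₀‖ > r₀`, `‖w + u₀‖ > r₀`, and
`‖w - u_i‖ ≠ r_i` for all `i`. -/
theorem flagwise_stmt8 (E : Type*) [NormedAddCommGroup E] [InnerProductSpace ℝ E]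
    (u₀ : E) (hu₀ : ‖u₀‖ = 1) (m : ℕ) (u : Fin m → E) (hu : ∀ i, ‖u i‖ = 1)
    (r₀ : ℝ) (hr₀ : r₀ ∈ Set.Ioo (0 : ℝ) 1)
    (r : Fin m → ℝ) (hr : ∀ i, r i ∈ Set.Ioo (0 : ℝ) (Real.sqrt 2))
    (P : Submodule ℝ E) (hP : Module.finrank ℝ P = 2) :
    ∃ w ∈ P, ‖w‖ = 1 ∧ r₀ < ‖w - u₀‖ ∧ r₀ < ‖w + u₀‖ ∧ ∀ i, ‖w - u i‖ ≠ r i := by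
  obtain ⟨e₁, he₁P, he₁, he₁u₀⟩ := P.exists_mem_norm_eq_one_inner_eq_zero (by omega) u₀
  obtain ⟨e₂, he₂P, he₂, he₂e₁⟩ := P.exists_mem_norm_eq_one_inner_eq_zero (by omega) e₁
  have hlevel : ∀ i, 1 - r i ^ 2 / 2 ≠ 0 := fun i => by
    have := Real.sq_sqrt (show (0 : ℝ) ≤ 2 by norm_num) ▸
      pow_lt_pow_left₀ (hr i).2 (hr i).1.le two_ne_zero
    linarith
  have hbad : (⋃ i, {t | ⟪circleParam e₁ e₂ t, u i⟫ = 1 - r i ^ 2 / 2}).Finite :=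
    Set.finite_iUnion fun i => finite_setOf_inner_circleParam_eq (u i) (hlevel i)
  obtain ⟨t, ⟨ht0, ht⟩, htbad⟩ :=
    ((Set.Ioo_infinite (by norm_num : (0 : ℝ) < 1 / 4)).sdiff hbad).nonempty
  set w := circleParam e₁ e₂ t
  have hw : ‖w‖ = 1 := norm_circleParam he₁ he₂ (real_inner_comm e₁ e₂ ▸ he₂e₁) t
  obtain ⟨hwu₀_low, hwu₀_high⟩ : -(1 / 2) < ⟪w, u₀⟫ ∧ ⟪w, u₀⟫ < 1 / 2 :=
    abs_lt.mp (by linarith [abs_inner_circleParam_le he₂ hu₀ he₁u₀ t, abs_of_pos ht0])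
  refine ⟨w, circleParam_mem he₁P he₂P t, hw, ?_, ?_,
    fun i hi => htbad (Set.mem_iUnion.mpr ⟨i, ?_⟩)⟩
  · linarith [hr₀.2, one_lt_norm_sub_of_inner_lt hw hu₀ hwu₀_high]
  · have := one_lt_norm_sub_of_inner_lt hw (norm_neg u₀ ▸ hu₀)
      (by rw [inner_neg_right]; linarith)
    linarith [hr₀.2, sub_neg_eq_add w u₀ ▸ this]
  · have := norm_sub_sq_eq_two_sub_inner hw (hu i)
    rw [hi] at this
    show ⟪w, u i⟫ = 1 - r i ^ 2 / 2
    linarith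
end
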